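/- Let M_{ij} : M_n(ℂ) → M_n(ℂ) for 1 ≤ i,j ≤ m be linear maps such that for all complex vectors (x_1,…,x_m) the map ∑_{i,j} x_i x̄_j M_{ij} is completely positive, and ∑_j M_{jj}[1] = 1. Then for every density matrix σ ∈ M_n(ℂ), the m×m matrix ρ with entries ρ_{ij} = Tr(σ M_{ij}[1]) is a density matrix (positive semidefinite with trace 1). -/

import Mathlib

open Matrix
open scoped ComplexOrder

/-- The amplification `Φ ⊗ id_k` of a map `Φ` on `n × n` matrices. -/
def tensorId {n : ℕ} (k : ℕ)
    (Φ : Matrix (Fin n) (Fin n) ℂ → Matrix (Fin n) (Fin n) ℂ)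
    (X : Matrix (Fin n × Fin k) (Fin n × Fin k) ℂ) :
    Matrix (Fin n × Fin k) (Fin n × Fin k) ℂ :=
  fun p q => Φ (fun i j => X (i, p.2) (j, q.2)) p.1 q.1

/-- Complete positivity of a map on `n × n` complex matrices. -/
def IsCompletelyPositive {n : ℕ}
    (Φ : Matrix (Fin n) (Fin n) ℂ → Matrix (Fin n) (Fin n) ℂ) : Prop :=
  ∀ (k : ℕ) (X : Matrix (Fin n × Fin k) (Fin n × Fin k) ℂ),
    X.PosSemidef → (tensorId k Φ X).PosSemidef

lemma trace_nonneg_of_posSemidef {n : ℕ} {B : Matrix (Fin n) (Fin n) ℂ}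
    (hB : B.PosSemidef) : 0 ≤ B.trace := by
  rw [Matrix.trace]
  apply Finset.sum_nonneg
  intro i _
  have := hB.dotProduct_mulVec_nonneg (Pi.single i 1)
  simpa [dotProduct, Matrix.mulVec, Pi.single_apply, Matrix.diag] using this

open scoped MatrixOrder in
lemma trace_mul_nonneg {n : ℕ} {A B : Matrix (Fin n) (Fin n) ℂ}
    (hA : A.PosSemidef) (hB : B.PosSemidef) : 0 ≤ (A * B).trace := by
  have h1 : A = CFC.sqrt A * CFC.sqrt A := (CFC.sqrt_mul_sqrt_self A hA.nonneg).symm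
  have h2 : (A * B).trace = ((CFC.sqrt A).conjTranspose * B * CFC.sqrt A).trace := by
    rw [(CFC.sqrt_nonneg A).posSemidef.1.eq, Matrix.trace_mul_cycle (CFC.sqrt A) B (CFC.sqrt A), ← h1]
  rw [h2]
  exact trace_nonneg_of_posSemidef (hB.conjTranspose_mul_mul_same _)

lemma posSemidef_of_dotProduct {m : ℕ} (ρ : Matrix (Fin m) (Fin m) ℂ)
    (h : ∀ x : Fin m → ℂ, 0 ≤ dotProduct (star x) (ρ *ᵥ x)) : ρ.PosSemidef := by
  have herm : ρ.IsHermitian := by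
    rw [Matrix.isHermitian_iff_isSymmetric,
      LinearMap.isSymmetric_iff_inner_map_self_real]
    intro x
    have h1 : (inner ℂ (ρ.toEuclideanLin x) x : ℂ) =
        star (dotProduct (star (x : Fin m → ℂ)) (ρ *ᵥ (x : Fin m → ℂ))) := by
      rw [← inner_conj_symm]
      congr 1
      rw [EuclideanSpace.inner_eq_star_dotProduct, dotProduct_comm]
      rfl
    have h2 := h x
    rw [Complex.le_def] at h2
    have h3 : star (dotProduct (star (x : Fin m → ℂ)) (ρ *ᵥ (x : Fin m → ℂ)))
        = dotProduct (star (x : Fin m → ℂ)) (ρ *ᵥ (x : Fin m → ℂ)) := by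
      have him : (dotProduct (star (x : Fin m → ℂ)) (ρ *ᵥ (x : Fin m → ℂ))).im = 0 := by
        simpa using h2.2.symm
      apply Complex.ext
      · simp
      · simp [him]
    rw [h1, h3]
    exact h3
  exact PosSemidef.of_dotProduct_mulVec_nonneg herm h

/-- `Φ(1)` is PSD whenever `Φ` is completely positive (via `k = 1`). -/
lemma phi_one_psd {n : ℕ} (Φ : Matrix (Fin n) (Fin n) ℂ → Matrix (Fin n) (Fin n) ℂ)
    (hΦ : IsCompletelyPositive Φ) : (Φ 1).PosSemidef := by
  have hX : ((1 : Matrix (Fin n) (Fin n) ℂ).submatrix Prod.fst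
      (Prod.fst : Fin n × Fin 1 → Fin n)).PosSemidef :=
    Matrix.PosSemidef.one.submatrix _
  have h := (hΦ 1 _ hX).submatrix (fun i : Fin n => (i, (0 : Fin 1)))
  have he : (tensorId 1 Φ ((1 : Matrix (Fin n) (Fin n) ℂ).submatrix Prod.fst
      Prod.fst)).submatrix (fun i : Fin n => (i, (0 : Fin 1)))
      (fun i : Fin n => (i, (0 : Fin 1))) = Φ 1 := by
    ext a b
    show Φ (fun i j => (1 : Matrix (Fin n) (Fin n) ℂ) i j) a b = Φ 1 a b
    rfl
  rwa [he] at h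

/-- If `∑ i j, x_i x̄_j M_{ij}` is completely positive for every vector `x` and
`∑ j, M_{jj}[1] = 1`, then for every density matrix `σ` the matrix
`ρ_{ij} = Tr(σ M_{ij}[1])` is a density matrix. -/
theorem stmt_8 {n m : ℕ}
    (M : Fin m → Fin m → (Matrix (Fin n) (Fin n) ℂ → Matrix (Fin n) (Fin n) ℂ))
    (hlin : ∀ i j, IsLinearMap ℂ (M i j))
    (hCP : ∀ x : Fin m → ℂ,
      IsCompletelyPositive (fun X => ∑ i, ∑ j, (x i * star (x j)) • M i j X))
    (hunital : ∑ j, M j j 1 = 1)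
    (σ : Matrix (Fin n) (Fin n) ℂ) (hσ : σ.PosSemidef) (hσtr : σ.trace = 1) :
    (Matrix.of fun i j => (σ * M i j 1).trace).PosSemidef ∧
      (Matrix.of fun i j : Fin m => (σ * M i j 1).trace).trace = 1 := by
  constructor
  · apply posSemidef_of_dotProduct
    intro y
    have key := phi_one_psd _ (hCP (star y))
    have hts : dotProduct (star y) ((Matrix.of fun i j => (σ * M i j 1).trace) *ᵥ y)
        = (σ * ∑ i, ∑ j, ((star y) i * star ((star y) j)) • M i j 1).trace := by
      simp only [Matrix.mul_sum, Matrix.trace_sum, Matrix.mul_smul, Matrix.trace_smul,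
        dotProduct, Matrix.mulVec, Matrix.of_apply, Pi.star_apply, star_star,
        smul_eq_mul]
      refine Finset.sum_congr rfl fun i _ => ?_
      rw [Finset.mul_sum]
      refine Finset.sum_congr rfl fun j _ => ?_
      ring
    rw [hts]
    exact trace_mul_nonneg hσ key
  · have : (Matrix.of fun i j : Fin m => (σ * M i j 1).trace).trace
        = (σ * ∑ j, M j j 1).trace := by
      rw [Matrix.mul_sum, Matrix.trace_sum]
      simp [Matrix.trace, Matrix.diag]
    rw [this, hunital, mul_one, hσtr]
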